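/- Let γ be a word in {NE,D}^* and φ(γ) = (γ_0,...,γ_b) with b = bounce(γ). Then for all 0 ≤ i < b: area(γ_{i+1}) = area(γ_i) + 1, bounce(γ_{i+1}) = bounce(γ_i) - 1, area(γ_i) = bounce(γ_{b-i}), and bounce(γ_i) = area(γ_{b-i}). -/

import Mathlib

open scoped Classical

inductive Step : Type
  | N | E | D
deriving DecidableEq, Repr

instance : Fintype Step :=
  ⟨{Step.N, Step.E, Step.D}, by intro x; cases x <;> simp⟩

open Step

/-- number of occurrences of the letter `s` in the word `w` -/
def cnt (s : Step) (w : List Step) : ℕ := w.count s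

/-- Schröder (or Dyck, if no `D`s) path in an `n × n` grid: every prefix has at
least as many `N`s as `E`s, and the totals agree. -/
def IsSchroeder (w : List Step) : Prop :=
  (∀ p : List Step, p <+: w → cnt E p ≤ cnt N p) ∧ cnt N w = cnt E w

/-- words that are concatenations of blocks `NE` and `D` -/
inductive IsNED : List Step → Prop
  | nil : IsNED []
  | ne {w} : IsNED w → IsNED (N :: E :: w)
  | d {w} : IsNED w → IsNED (D :: w)

/-- area of a Schröder path: the number of lower triangles between the path and the
main diagonal, computed as the sum over `N` and `D` steps of the height
`#N - #E` of the starting point of the step above the diagonal. -/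
def areaAux : ℕ → List Step → ℕ
  | _, [] => 0
  | h, N :: w => h + areaAux (h+1) w
  | h, D :: w => h + areaAux h w
  | h, E :: w => areaAux (h-1) w

def area (w : List Step) : ℕ := areaAux 0 w

/-- area of an `N/E` lattice path in a rectangular grid: the number of boxes under
the path, i.e. the sum over `E` steps of the number of `N` steps before it. -/
def areaNEAux : ℕ → List Step → ℕ
  | _, [] => 0
  | h, N :: w => areaNEAux (h+1) w
  | h, E :: w => h + areaNEAux h w
  | h, D :: w => areaNEAux h w

def areaNE (w : List Step) : ℕ := areaNEAux 0 w

/-- number of `N`s occurring before the `(j+1)`-st `E` (`j` is 0-indexed);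
this is the height of the path above the horizontal interval `[j, j+1]`. -/
def nBefore : List Step → ℕ → ℕ
  | [], _ => 0
  | N :: w, j => 1 + nBefore w j
  | E :: w, j => if j = 0 then 0 else nBefore w (j-1)
  | D :: w, j => nBefore w j

/-- number of `E`s occurring before the `(i+1)`-st `N` (`i` is 0-indexed). -/
def eBefore : List Step → ℕ → ℕ
  | [], _ => 0
  | E :: w, i => 1 + eBefore w i
  | N :: w, i => if i = 0 then 0 else eBefore w (i-1)
  | D :: w, i => eBefore w i

/-- number of `D`s occurring after the `e`-th `E` (`e` is 1-indexed). -/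
def dAfterE : List Step → ℕ → ℕ
  | [], _ => 0
  | E :: w, e => if e ≤ 1 then cnt D w else dAfterE w (e-1)
  | D :: w, e => dAfterE w e
  | N :: w, e => dAfterE w e

/-- Combined computation of `bounce(Γ(γ)) + numph(γ)` along the bounce path of
`Γ(γ)`.  Here `g` is the Schröder path, `w = Γ(g)` is the underlying Dyck path,
`nn` its size; the bounce path has corners (peaks) at the positions
`j₀ = 0, jₖ₊₁ = nBefore w jₖ`; each intermediate return `jₖ₊₁ < nn` contributes
`nn - jₖ₊₁` to the bounce of `Γ(g)`, and the peak with corner at `jₖ` is the start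
of the `(jₖ+1)`-st east step, contributing to numph the number of diagonal steps of
`g` above it, i.e. after that east step. -/
def bounceAux (g w : List Step) (nn : ℕ) : ℕ → ℕ → ℕ
  | 0, _ => 0
  | fuel+1, j =>
      dAfterE g (j+1) +
        (if nn ≤ nBefore w j ∨ nBefore w j ≤ j then 0
         else (nn - nBefore w j) + bounceAux g w nn fuel (nBefore w j))

/-- the bounce statistic of a Schröder path: `bounce(Γ(γ)) + numph(γ)` -/
def bounce (g : List Step) : ℕ :=
  let w := g.filter (fun s => s ≠ D)
  let nn := cnt E w
  if nn = 0 then 0 else bounceAux g w nn g.length 0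

/-- the (signed) area coordinate `a_i = m·i - (#E before the (i+1)-st N)` of line `i`
(0-indexed) for a path in an `n × mn` grid. -/
def aLine (m : ℕ) (g : List Step) (i : ℕ) : ℤ := (m : ℤ) * i - eBefore g i

/-- an `(n, mn)`-Dyck path: `n` north steps, `mn` east steps, no diagonal steps,
staying weakly above the main diagonal. -/
def IsParkingPath (n m : ℕ) (g : List Step) : Prop :=
  (∀ s ∈ g, s ≠ D) ∧ cnt N g = n ∧ cnt E g = m * n ∧
    ∀ p : List Step, p <+: g → cnt E p ≤ m * cnt N p

/-- an `(n, mn)`-parking function: an `(n,mn)`-Dyck path labelled by a permutation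
`w` of `{0, …, n-1}` whose labels increase within each column. -/
def IsParking (n m : ℕ) (g : List Step) (w : Fin n → Fin n) : Prop :=
  IsParkingPath n m g ∧ Function.Bijective w ∧
    ∀ i j : Fin n, (j : ℕ) = (i : ℕ) + 1 → eBefore g (i : ℕ) = eBefore g (j : ℕ) → w i < w j

/-- the diagonal inversion statistic of an `(n, mn)`-parking function -/
def dinv (n m : ℕ) (g : List Step) (w : Fin n → Fin n) : ℤ :=
  ∑ i : Fin n, ∑ j : Fin n,
    if (i : ℕ) < (j : ℕ) then
      (if w i < w j then max 0 ((m : ℤ) - |aLine m g (i : ℕ) - aLine m g (j : ℕ)|) else 0) +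
        (if w j < w i then max 0 ((m : ℤ) - |aLine m g (j : ℕ) - aLine m g (i : ℕ) + 1|) else 0)
    else 0

/-- the number of descents of the word `w` -/
def desNum (n : ℕ) (w : Fin n → Fin n) : ℕ :=
  ((Finset.range (n-1)).filter fun i =>
    ∃ hj : i + 1 < n, w ⟨i+1, hj⟩ < w ⟨i, Nat.lt_of_succ_lt hj⟩).card

/-- the major index of the word `w` (with positions 1-indexed as usual) -/
def majStat (n : ℕ) (w : Fin n → Fin n) : ℕ :=
  ∑ i ∈ (Finset.range (n-1)).filter (fun i =>
    ∃ hj : i + 1 < n, w ⟨i+1, hj⟩ < w ⟨i, Nat.lt_of_succ_lt hj⟩), (i+1)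

/-- the reading word of a labelled path in an `n × mn` grid: labels are read along
diagonals parallel to the main diagonal, starting with the farthest diagonal,
each diagonal being read from top-right to bottom-left. -/
def readWord (n m : ℕ) (g : List Step) (lab : ℕ → ℕ) : List ℕ :=
  ((List.range (m * n + 1)).map fun k =>
    (((List.range n).reverse.filter fun i => aLine m g i = (m * n : ℤ) - k).map lab)).flatten

/-- the labelling function `ℕ → ℕ` associated to a permutation of `Fin n` -/
def labOf {n : ℕ} (w : Fin n → Fin n) : ℕ → ℕ :=
  fun i => if h : i < n then (w ⟨i, h⟩ : ℕ) else 0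

/-- one step of the algorithm `φ`, on the reversed word: find the rightmost
(i.e. first in the reversed word) east step not followed by an east step,
and swap it with the letter following it. -/
def phiRevAux : List Step → List Step
  | a :: E :: t => if a ≠ E then E :: a :: t else a :: phiRevAux (E :: t)
  | a :: t => a :: phiRevAux t
  | [] => []

/-- one step of the algorithm `φ` -/
def phiStep (w : List Step) : List Step := (phiRevAux w.reverse).reverse

/-- the sequence `φ(γ) = (γ₀, γ₁, …, γ_{bounce γ})` produced by the algorithm -/
def phiSeq (g : List Step) : List (List Step) :=
  (List.range (bounce g + 1)).map fun i => phiStep^[i] g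

/-- the union of all sequences `φ(γ)` over area-0 Schröder paths with `n` blocks -/
def phiUniv (n : ℕ) : Set (List Step) :=
  {p | ∃ g, IsNED g ∧ cnt N g + cnt D g = n ∧ p ∈ phiSeq g}

/-- the map replacing each block `NE` by `N` and each `D` by `E` -/
def theta : List Step → List Step
  | N :: E :: w => N :: theta w
  | D :: w => E :: theta w
  | _ :: w => theta w
  | [] => []

/-- the cells of the hook-shaped Young diagram `(d, 1^{n-d})` (row 0 is the arm). -/
def hookCells (n d : ℕ) : Finset (ℕ × ℕ) :=
  ((Finset.range d).image fun c => ((0 : ℕ), c)) ∪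
    ((Finset.range (n - d + 1)).image fun r => (r, (0 : ℕ)))

/-- a standard Young tableau of hook shape `(d, 1^{n-d})`: `pos i` is the cell
`(row, column)` containing the entry `i+1`; entries increase along rows and columns. -/
structure HookSYT (n d : ℕ) where
  pos : Fin n → ℕ × ℕ
  mem : ∀ i, pos i ∈ hookCells n d
  inj : Function.Injective pos
  rowInc : ∀ i j : Fin n, (pos i).1 = (pos j).1 → (pos i).2 < (pos j).2 → i < j
  colInc : ∀ i j : Fin n, (pos i).2 = (pos j).2 → (pos i).1 < (pos j).1 → i < j

/-- the descent set of a standard Young tableau: entries `i ∈ {1, …, n-1}` such that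
the entry `i+1` lies in a strictly higher row than `i`. -/
def Des {n d : ℕ} (τ : HookSYT n d) : Finset ℕ :=
  (Finset.Icc 1 (n-1)).filter fun i =>
    ∃ hi : i < n, ∃ hi' : i - 1 < n, (τ.pos ⟨i - 1, hi'⟩).1 < (τ.pos ⟨i, hi⟩).1

/-- the major index of a standard Young tableau -/
def majT {n d : ℕ} (τ : HookSYT n d) : ℕ := ∑ i ∈ Des τ, i

/-- the number of descents of a standard Young tableau -/
def desT {n d : ℕ} (τ : HookSYT n d) : ℕ := (Des τ).card

/-- the maximum of the descent set -/
def maxDes {n d : ℕ} (τ : HookSYT n d) : ℕ := (Des τ).sup id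

/-- the map `M_{n,d}`: the path `γ₁γ₂⋯γₙ` with `γₙ = NE`, `γ_{n-i} = NE` if
`i ∈ Des τ` and `γ_{n-i} = D` otherwise -/
def Mmap (n d : ℕ) (τ : HookSYT n d) : List Step :=
  (((List.range n).map fun j =>
    if j = n - 1 then [N, E]
    else if (n - 1 - j) ∈ Des τ then [N, E] else [D])).flatten

/-- the map `S_{n,d}`: the path `γ₁⋯γ_{n-1}` with `γ_{n-i} = NNEE` if
`i = max Des τ` and `1 ∈ Des τ`, `γ_{n-i} = NDE` if `i = max Des τ` and
`1 ∉ Des τ`, `γ_{n-i} = NE` if `i = 1` or `i ∈ Des τ ∖ {max Des τ}`, and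
`γ_{n-i} = D` otherwise. -/
def Smap (n d : ℕ) (τ : HookSYT n d) : List Step :=
  (((List.range (n-1)).map fun j =>
    if (n - 1 - j) = maxDes τ then (if 1 ∈ Des τ then [N,N,E,E] else [N,D,E])
    else if (n - 1 - j) = 1 ∨ (n - 1 - j) ∈ Des τ then [N,E] else [D])).flatten

/-- the set `V_{n,d}` of Schröder paths of the form `Dʲ NNEE u` or `Dʲ NDE u`
with `u ∈ {NE,D}* NE`, having `n-d+1` north steps and `d-1` diagonal steps. -/
def Vset (n d : ℕ) : Set (List Step) :=
  {g | (∃ j u, IsNED u ∧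
      (g = List.replicate j D ++ [N,N,E,E] ++ (u ++ [N,E]) ∨
       g = List.replicate j D ++ [N,D,E] ++ (u ++ [N,E]))) ∧
     cnt N g = n - d + 1 ∧ cnt D g = d - 1}

/-- Schröder paths in an `n × n` grid with `dd` diagonal steps, area `a`,
ending with `NE` -/
def SchT (n dd a : ℕ) : Set (List Step) :=
  {g | IsSchroeder g ∧ cnt D g = dd ∧ cnt N g = n - dd ∧ area g = a ∧ ∃ u, g = u ++ [N, E]}

/-- the 'upper' forms: `Dʲ NNEE γ' NE NE` or `γ' NE Dʲ NNEE γ''` -/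
def UpperForm (g : List Step) : Prop :=
  (∃ j u, IsNED u ∧ g = List.replicate j D ++ [N,N,E,E] ++ u ++ [N,E,N,E]) ∨
  (∃ u j v, IsNED u ∧ g = u ++ [N,E] ++ List.replicate j D ++ [N,N,E,E] ++ v)

/-- the 'lower' forms: `Dʲ NNEE γ' D NE` or `γ' NDE Dʲ NE γ''` -/
def LowerForm (g : List Step) : Prop :=
  (∃ j u, IsNED u ∧ g = List.replicate j D ++ [N,N,E,E] ++ u ++ [D,N,E]) ∨
  (∃ u j v, IsNED u ∧ g = u ++ [N,D,E] ++ List.replicate j D ++ [N,E] ++ v)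

/-- the number of distinct columns of the path -/
def Tcols (n : ℕ) (g : List Step) : ℕ :=
  ((Finset.range n).image fun i => eBefore g i).card

/-- the `q`-integer `[k]_q = 1 + q + ⋯ + q^{k-1}` as a polynomial -/
noncomputable def qInt (k : ℕ) : Polynomial ℤ := ∑ i ∈ Finset.range k, Polynomial.X ^ i

/-- the `q`-factorial `[k]!_q` -/
noncomputable def qFact (k : ℕ) : Polynomial ℤ := ∏ i ∈ Finset.range k, qInt (i+1)


/-!
Each step of `φ` moves an east step one place to the right, past a north or diagonal step,
and so adds exactly one lower triangle to the area; on an area-zero path `γ ∈ {NE, D}*` the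
iterates stay of the shape `p · N c E d E^(#N c + #N d)` with `p ∈ {NE, D}*` and `c`, `d` free
of east steps. On such a word `φ` moves the first letter of `d` to the end of `c`, and once `d`
is empty the last `NE` block of `p` opens a new core. Following the bounce path through these
shapes, every step lowers `bounce` by exactly one, so `area (γᵢ) = i` and
`bounce (γᵢ) = b - i` for `i ≤ b`, and all four identities follow.
-/

section Counting

theorem cnt_cons (s a : Step) (w : List Step) :
    cnt s (a :: w) = cnt s w + if a = s then 1 else 0 := by
  simp [cnt, List.count_cons]

theorem cnt_append (s : Step) (u v : List Step) : cnt s (u ++ v) = cnt s u + cnt s v :=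
  List.count_append ..

theorem cnt_replicate (s t : Step) (r : ℕ) :
    cnt s (List.replicate r t) = if t = s then r else 0 := by
  simp [cnt, List.count_replicate]

theorem cnt_E_eq_zero_iff {w : List Step} : cnt E w = 0 ↔ E ∉ w := List.count_eq_zero

theorem length_eq_cnt_add_cnt_add_cnt (w : List Step) :
    w.length = cnt N w + cnt E w + cnt D w := by
  induction w with
  | nil => rfl
  | cons a w ih => cases a <;> simp [cnt_cons, ih] <;> omega

theorem cnt_E_filter_ne_D (w : List Step) : cnt E (w.filter (· ≠ D)) = cnt E w := by
  simp [cnt, List.count_filter]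

end Counting

section PhiStep

theorem phiRevAux_E_cons (l : List Step) : phiRevAux (E :: l) = E :: phiRevAux l := by
  rcases l with _ | ⟨_ | _ | _, _⟩ <;> simp [phiRevAux]

theorem phiRevAux_cons_of_head?_ne (a : Step) {l : List Step} (hl : l.head? ≠ some E) :
    phiRevAux (a :: l) = a :: phiRevAux l := by
  rcases l with _ | ⟨_ | _ | _, _⟩ <;> simp_all [phiRevAux]

theorem phiRevAux_swap {x : Step} (hx : x ≠ E) (z : List Step) :
    phiRevAux (x :: E :: z) = E :: x :: z := by
  simp [phiRevAux, hx]

theorem phiRevAux_append_swap {m : List Step} (hm : E ∉ m) {x : Step} (hx : x ≠ E)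
    (z : List Step) : phiRevAux (m ++ x :: E :: z) = m ++ E :: x :: z := by
  induction m with
  | nil => exact phiRevAux_swap hx z
  | cons a m ih =>
    rw [List.mem_cons, not_or] at hm
    rw [List.cons_append, phiRevAux_cons_of_head?_ne a, ih hm.2, List.cons_append]
    rcases m with _ | ⟨b, m⟩
    · simpa using hx
    · simpa using ne_of_mem_of_not_mem List.mem_cons_self hm.2

theorem phiRevAux_replicate_append (r : ℕ) (l : List Step) :
    phiRevAux (List.replicate r E ++ l) = List.replicate r E ++ phiRevAux l := by
  induction r with
  | zero => rfl
  | succ r ih => rw [List.replicate_succ, List.cons_append, phiRevAux_E_cons, ih]; rfl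

/-- `w'` is `w` with its rightmost east step that is followed by a non-east letter `x` swapped
with `x`. -/
def IsPhiSwap (w w' : List Step) : Prop :=
  ∃ u x m r, x ≠ E ∧ E ∉ m ∧ w = u ++ E :: x :: (m ++ List.replicate r E) ∧
    w' = u ++ x :: E :: (m ++ List.replicate r E)

theorem phiStep_eq_of_isPhiSwap {w w' : List Step} (h : IsPhiSwap w w') : phiStep w = w' := by
  obtain ⟨u, x, m, r, hx, hm, rfl, rfl⟩ := h
  have hm' : E ∉ m.reverse := by rwa [List.mem_reverse]
  have hrev : (u ++ E :: x :: (m ++ List.replicate r E)).reverse =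
      List.replicate r E ++ (m.reverse ++ x :: E :: u.reverse) := by simp
  rw [phiStep, hrev, phiRevAux_replicate_append, phiRevAux_append_swap hm' hx]
  simp

theorem IsPhiSwap.cons {w w' : List Step} (h : IsPhiSwap w w') (a : Step) :
    IsPhiSwap (a :: w) (a :: w') := by
  obtain ⟨u, x, m, r, hx, hm, rfl, rfl⟩ := h
  exact ⟨a :: u, x, m, r, hx, hm, rfl, rfl⟩

theorem IsPhiSwap.cnt_eq {w w' : List Step} (h : IsPhiSwap w w') (s : Step) :
    cnt s w' = cnt s w := by
  obtain ⟨u, x, m, r, -, -, rfl, rfl⟩ := h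
  simp only [cnt_append, cnt_cons]
  omega

end PhiStep

section BounceAux

theorem dAfterE_append_of_E_not_mem {m : List Step} (hm : E ∉ m) (z : List Step) (e : ℕ) :
    dAfterE (m ++ z) e = dAfterE z e := by
  induction m with
  | nil => rfl
  | cons a m ih =>
    rw [List.mem_cons, not_or] at hm
    cases a
    · exact ih hm.2
    · exact absurd rfl hm.1
    · exact ih hm.2

theorem dAfterE_replicate_E (r e : ℕ) : dAfterE (List.replicate r E) e = 0 := by
  induction r generalizing e with
  | zero => rfl
  | succ r ih => simp [List.replicate_succ, dAfterE, cnt_replicate, ih]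

theorem nBefore_append_of_E_not_mem {m : List Step} (hm : E ∉ m) (z : List Step) (j : ℕ) :
    nBefore (m ++ z) j = cnt N m + nBefore z j := by
  induction m with
  | nil => simp [cnt]
  | cons a m ih =>
    rw [List.mem_cons, not_or] at hm
    cases a
    · simp [nBefore, ih hm.2, cnt_cons]
      omega
    · exact absurd rfl hm.1
    · simp [nBefore, ih hm.2, cnt_cons]

theorem nBefore_replicate_E (r j : ℕ) : nBefore (List.replicate r E) j = 0 := by
  induction r generalizing j with
  | zero => rfl
  | succ r ih => cases j <;> simp [List.replicate_succ, nBefore, ih]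

theorem nBefore_filter_ne_D (w : List Step) (j : ℕ) :
    nBefore (w.filter (· ≠ D)) j = nBefore w j := by
  induction w generalizing j with
  | nil => rfl
  | cons a w ih => cases a <;> cases j <;> simp_all [nBefore]

theorem bounceAux_congr {g g' w w' : List Step} (hg : ∀ e, dAfterE g e = dAfterE g' e)
    (hw : ∀ j, nBefore w j = nBefore w' j) (nn f j : ℕ) :
    bounceAux g w nn f j = bounceAux g' w' nn f j := by
  induction f generalizing j with
  | zero => rfl
  | succ f ih => simp only [bounceAux, hg, hw, ih]

/-- Each bounce strictly increases `j` below `nn`, so fuel beyond `nn - j` is never used. -/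
theorem bounceAux_fuel_eq (g w : List Step) {nn f f' j : ℕ} (hj : j < nn)
    (hf : nn ≤ j + f) (hf' : nn ≤ j + f') : bounceAux g w nn f j = bounceAux g w nn f' j := by
  induction f generalizing f' j with
  | zero => omega
  | succ f ih =>
    obtain _ | f' := f'
    · omega
    simp only [bounceAux]
    split_ifs with h
    · rfl
    · rw [not_or, not_le, not_le] at h
      rw [ih (f' := f') h.1 (by omega) (by omega)]

theorem bounceAux_cons_NE (g W : List Step) (nn f j : ℕ) :
    bounceAux (N :: E :: g) (N :: E :: W) (nn + 1) f (j + 1) = bounceAux g W nn f j := by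
  induction f generalizing j with
  | zero => rfl
  | succ f ih =>
    have hn : nBefore (N :: E :: W) (j + 1) = nBefore W j + 1 := by
      simp [nBefore]
      omega
    simp only [bounceAux, hn]
    have hd : dAfterE (N :: E :: g) (j + 1 + 1) = dAfterE g (j + 1) := by simp [dAfterE]
    rw [hd, ← ih]
    split_ifs <;> first | rfl | omega

end BounceAux

section Bounce

theorem bounce_eq (g : List Step) :
    bounce g = if cnt E g = 0 then 0 else bounceAux g g (cnt E g) g.length 0 := by
  simp only [bounce, cnt_E_filter_ne_D]
  split_ifs
  · rfl
  · exact bounceAux_congr (fun _ => rfl) (nBefore_filter_ne_D g) ..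

theorem bounce_eq_zero_of_cnt_E_eq_zero {w : List Step} (h : cnt E w = 0) : bounce w = 0 := by
  rw [bounce_eq, if_pos h]

theorem cnt_E_le_length (w : List Step) : cnt E w ≤ w.length := List.count_le_length

theorem bounce_cons_D (w : List Step) : bounce (D :: w) = bounce w := by
  have hc : cnt E (D :: w) = cnt E w := by simp [cnt]
  rw [bounce_eq, bounce_eq, hc]
  split_ifs with h
  · rfl
  · have := cnt_E_le_length w
    rw [bounceAux_congr (g := D :: w) (w := D :: w) (g' := w) (w' := w) (fun _ => rfl)
      (fun _ => rfl)]
    exact bounceAux_fuel_eq _ _ (by omega) (by simp; omega) (by omega)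

theorem bounce_cons_NE (w : List Step) :
    bounce (N :: E :: w) = cnt D w + if cnt E w = 0 then 0 else cnt E w + bounce w := by
  have hc : cnt E (N :: E :: w) = cnt E w + 1 := by simp [cnt]
  have hd : dAfterE (N :: E :: w) 1 = cnt D w := by simp [dAfterE]
  have hn : nBefore (N :: E :: w) 0 = 1 := by simp [nBefore]
  rw [bounce_eq, bounce_eq, hc, if_neg (by omega), List.length_cons, List.length_cons,
    bounceAux, hd, hn]
  split_ifs with h
  · rfl
  · omega
  · omega
  · have := cnt_E_le_length w
    rw [Nat.add_sub_cancel_right, bounceAux_cons_NE,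
      bounceAux_fuel_eq _ _ (f' := w.length) (by omega) (by simp; omega) (by omega)]

end Bounce

section Area

theorem areaAux_append_of_E_not_mem {m : List Step} (hm : E ∉ m) (h : ℕ) (z : List Step) :
    areaAux h (m ++ z) = areaAux h m + areaAux (h + cnt N m) z := by
  induction m generalizing h with
  | nil => simp [areaAux, cnt]
  | cons a m ih =>
    rw [List.mem_cons, not_or] at hm
    cases a
    · simp only [List.cons_append, areaAux, ih hm.2, cnt_cons, ↓reduceIte]
      rw [show h + (cnt N m + 1) = h + 1 + cnt N m by omega]
      omega
    · exact absurd rfl hm.1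
    · simp [areaAux, ih hm.2, cnt_cons]
      omega

theorem areaAux_replicate_E (r h : ℕ) : areaAux h (List.replicate r E) = 0 := by
  induction r generalizing h with
  | zero => rfl
  | succ r ih => exact ih (h - 1)

theorem area_cons_D (w : List Step) : area (D :: w) = area w := by simp [area, areaAux]

theorem area_cons_NE (w : List Step) : area (N :: E :: w) = area w := by simp [area, areaAux]

theorem IsNED.area_eq_zero {g : List Step} (h : IsNED g) : area g = 0 := by
  induction h with
  | nil => rfl
  | ne _ ih => rwa [area_cons_NE]
  | d _ ih => rwa [area_cons_D]

end Area

section CorePath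

def corePath (c d : List Step) : List Step :=
  N :: (c ++ E :: (d ++ List.replicate (cnt N c + cnt N d) E))

variable {c d : List Step}

theorem bounce_corePath (hc : E ∉ c) (hd : E ∉ d) : bounce (corePath c d) = d.length := by
  -- With `p = #N c`, `q = #N d`, the Dyck path `N^(p+1) E N^q E^(p+q)` bounces at most once, at
  -- `p + 1`, contributing `q`; the `D`s of `d` lie above its first peak, none above the second.
  have hE : cnt E (corePath c d) = cnt N c + cnt N d + 1 := by
    simp [corePath, cnt_append, cnt_cons, cnt_replicate, cnt_E_eq_zero_iff.2 hc,
      cnt_E_eq_zero_iff.2 hd]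
  have hn₀ : nBefore (corePath c d) 0 = cnt N c + 1 := by
    simp [corePath, nBefore, nBefore_append_of_E_not_mem hc]
    omega
  have hn₁ : nBefore (corePath c d) (cnt N c + 1) = cnt N c + cnt N d + 1 := by
    simp [corePath, nBefore, nBefore_append_of_E_not_mem hc, nBefore_append_of_E_not_mem hd,
      nBefore_replicate_E]
    omega
  have hd₀ : dAfterE (corePath c d) 1 = cnt D d := by
    simp [corePath, dAfterE, dAfterE_append_of_E_not_mem hc, cnt_append, cnt_replicate]
  have hd₁ : dAfterE (corePath c d) (cnt N c + 1 + 1) = 0 := by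
    simp [corePath, dAfterE, dAfterE_append_of_E_not_mem hc, dAfterE_append_of_E_not_mem hd,
      dAfterE_replicate_E]
  have hlen : cnt N c + cnt N d + 1 + 1 ≤ (corePath c d).length := by
    simp [corePath]
    omega
  have := length_eq_cnt_add_cnt_add_cnt d
  have := cnt_E_eq_zero_iff.2 hd
  rw [bounce_eq, hE, if_neg (by omega),
    bounceAux_fuel_eq _ _ (f' := cnt N c + cnt N d + 1 + 1) (by omega) (by omega) (by omega)]
  simp only [bounceAux, hd₀, hn₀, zero_add]
  by_cases hq : cnt N d = 0
  · rw [if_pos (Or.inl (by omega))]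
    omega
  · rw [if_neg (by omega), hd₁, hn₁, if_pos (Or.inl le_rfl)]
    omega

theorem isPhiSwap_corePath {x : Step} (hx : x ≠ E) (hd : E ∉ d) :
    IsPhiSwap (corePath c (x :: d)) (corePath (c ++ [x]) d) := by
  refine ⟨N :: c, x, d, cnt N c + cnt N (x :: d), hx, hd, by simp [corePath], ?_⟩
  have : cnt N c + cnt N (x :: d) = cnt N (c ++ [x]) + cnt N d := by
    rw [cnt_append, Nat.add_assoc, ← cnt_append N [x] d]
    rfl
  simp [corePath, this]

theorem isPhiSwap_cons_NE {y : Step} (hy : y ≠ E) (hd : E ∉ d) :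
    IsPhiSwap (N :: E :: (y :: d ++ List.replicate (cnt N (y :: d)) E)) (corePath [y] d) := by
  refine ⟨[N], y, d, cnt N (y :: d), hy, hd, rfl, ?_⟩
  rw [corePath, ← cnt_append N [y] d]
  rfl

theorem area_corePath (hc : E ∉ c) (hd : E ∉ d) :
    area (corePath c d) = areaAux 1 c + areaAux (cnt N c) d := by
  simp [area, corePath, areaAux, areaAux_append_of_E_not_mem hc,
    areaAux_append_of_E_not_mem hd, areaAux_replicate_E]

theorem area_corePath_append_singleton (hc : E ∉ c) {x : Step} (hx : x ≠ E) (hd : E ∉ d) :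
    area (corePath (c ++ [x]) d) = area (corePath c (x :: d)) + 1 := by
  have hcx : E ∉ c ++ [x] := by simp [hc, hx.symm]
  have hxd : E ∉ x :: d := by simp [hd, hx.symm]
  rw [area_corePath hcx hd, area_corePath hc hxd, areaAux_append_of_E_not_mem hc]
  cases x <;> simp_all [areaAux, cnt] <;> omega

theorem area_corePath_singleton {y : Step} (hy : y ≠ E) (hd : E ∉ d) :
    area (corePath [y] d) =
      area (N :: E :: (y :: d ++ List.replicate (cnt N (y :: d)) E)) + 1 := by
  have hyd : E ∉ y :: d := by simp [hd, hy.symm]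
  rw [area_cons_NE, area_corePath (by simpa using hy.symm) hd, area,
    areaAux_append_of_E_not_mem hyd, areaAux_replicate_E]
  cases y <;> simp_all [areaAux, cnt] <;> omega

end CorePath

section Invariant

/-- The words `p` and `p ++ corePath c d` with `IsNED p` and `E ∉ c`, `E ∉ d`: the shapes
taken by the iterates of `phiStep` on an area-zero path. -/
inductive IsNEDWithCore : List Step → Prop
  | nil : IsNEDWithCore []
  | d {w} : IsNEDWithCore w → IsNEDWithCore (D :: w)
  | ne {w} : IsNEDWithCore w → IsNEDWithCore (N :: E :: w)
  | core {c d} : E ∉ c → E ∉ d → IsNEDWithCore (corePath c d)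

theorem IsNED.isNEDWithCore {g : List Step} (h : IsNED g) : IsNEDWithCore g := by
  induction h with
  | nil => exact .nil
  | ne _ ih => exact ih.ne
  | d _ ih => exact ih.d

namespace IsNEDWithCore

variable {w : List Step}

theorem cnt_N_eq_cnt_E (h : IsNEDWithCore w) : cnt N w = cnt E w := by
  induction h with
  | nil => rfl
  | d _ ih => simpa [cnt_cons] using ih
  | ne _ ih => simpa [cnt_cons] using ih
  | core hc hd =>
    simp [corePath, cnt_append, cnt_cons, cnt_replicate, cnt_E_eq_zero_iff.2 hc,
      cnt_E_eq_zero_iff.2 hd]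

theorem eq_append_replicate_of_bounce_eq_zero (h : IsNEDWithCore w) (hb : bounce w = 0) :
    ∃ m, E ∉ m ∧ w = m ++ List.replicate (cnt N m) E := by
  induction h with
  | nil => exact ⟨[], by simp, rfl⟩
  | @d w _ ih =>
    obtain ⟨m, hm, rfl⟩ := ih (by rwa [bounce_cons_D] at hb)
    exact ⟨D :: m, by simpa using hm, by simp [cnt_cons]⟩
  | @ne w hw _ =>
    rw [bounce_cons_NE] at hb
    have hE : cnt E w = 0 := by
      by_contra hne
      rw [if_neg hne] at hb
      omega
    have hD : cnt D w = 0 := by omega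
    have hN : cnt N w = 0 := hw.cnt_N_eq_cnt_E.trans hE
    have hnil : w = [] := by
      have := length_eq_cnt_add_cnt_add_cnt w
      exact List.eq_nil_of_length_eq_zero (by omega)
    exact ⟨[N], by simp, by simp [hnil, cnt]⟩
  | @core c d hc hd =>
    rw [bounce_corePath hc hd, List.length_eq_zero_iff] at hb
    subst hb
    exact ⟨N :: c, by simpa using hc, by
      simp [corePath, cnt, List.replicate_succ]⟩

theorem exists_isPhiSwap_cons_NE_of_bounce_eq_zero (h : IsNEDWithCore w) (hb₀ : bounce w = 0)
    (hb : 0 < bounce (N :: E :: w)) :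
    ∃ w', IsPhiSwap (N :: E :: w) w' ∧ IsNEDWithCore w' ∧
      bounce w' + 1 = bounce (N :: E :: w) ∧ area w' = area (N :: E :: w) + 1 := by
  obtain ⟨m, hm, rfl⟩ := h.eq_append_replicate_of_bounce_eq_zero hb₀
  have hbounce : bounce (N :: E :: (m ++ List.replicate (cnt N m) E)) = m.length := by
    rw [bounce_cons_NE, hb₀, length_eq_cnt_add_cnt_add_cnt m]
    simp [cnt_append, cnt_replicate, cnt_E_eq_zero_iff.2 hm]
    split_ifs <;> omega
  obtain _ | ⟨y, d⟩ := m
  · simp_all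
  rw [List.mem_cons, not_or] at hm
  have hy : E ∉ [y] := by simpa using hm.1
  refine ⟨corePath [y] d, isPhiSwap_cons_NE (Ne.symm hm.1) hm.2, .core hy hm.2, ?_,
    area_corePath_singleton (Ne.symm hm.1) hm.2⟩
  rw [bounce_corePath hy hm.2, hbounce, List.length_cons]

theorem exists_isPhiSwap (h : IsNEDWithCore w) (hb : 0 < bounce w) :
    ∃ w', IsPhiSwap w w' ∧ IsNEDWithCore w' ∧ bounce w' + 1 = bounce w ∧
      area w' = area w + 1 := by
  induction h with
  | nil => simp [bounce_eq_zero_of_cnt_E_eq_zero (w := []) rfl] at hb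
  | d _ ih =>
    rw [bounce_cons_D] at hb ⊢
    obtain ⟨w', hs, hw', hb', ha'⟩ := ih hb
    exact ⟨D :: w', hs.cons D, hw'.d, by rwa [bounce_cons_D], by rwa [area_cons_D, area_cons_D]⟩
  | @ne w hw ih =>
    obtain hb₀ | hpos := Nat.eq_zero_or_pos (bounce w)
    · exact hw.exists_isPhiSwap_cons_NE_of_bounce_eq_zero hb₀ hb
    obtain ⟨w', hs, hw', hb', ha'⟩ := ih hpos
    have hE : cnt E w ≠ 0 := fun h0 => by simp [bounce_eq_zero_of_cnt_E_eq_zero h0] at hpos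
    refine ⟨N :: E :: w', (hs.cons E).cons N, hw'.ne, ?_, by rwa [area_cons_NE, area_cons_NE]⟩
    simp only [bounce_cons_NE, hs.cnt_eq, if_neg hE]
    omega
  | @core c d hc hd =>
    obtain _ | ⟨x, d⟩ := d
    · simp [bounce_corePath hc hd] at hb
    rw [List.mem_cons, not_or] at hd
    have hcx : E ∉ c ++ [x] := by simp [hc, hd.1]
    refine ⟨corePath (c ++ [x]) d, isPhiSwap_corePath (Ne.symm hd.1) hd.2, .core hcx hd.2, ?_,
      area_corePath_append_singleton hc (Ne.symm hd.1) hd.2⟩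
    rw [bounce_corePath hcx hd.2, bounce_corePath hc (by simp [hd.1, hd.2]), List.length_cons]

theorem iterate_phiStep (h : IsNEDWithCore w) {i : ℕ} (hi : i ≤ bounce w) :
    IsNEDWithCore (phiStep^[i] w) ∧ bounce (phiStep^[i] w) + i = bounce w ∧
      area (phiStep^[i] w) = area w + i := by
  induction i with
  | zero => exact ⟨h, rfl, rfl⟩
  | succ i ih =>
    obtain ⟨hi', hb, ha⟩ := ih (by omega)
    obtain ⟨w', hs, hw', hb', ha'⟩ := hi'.exists_isPhiSwap (by omega)
    rw [Function.iterate_succ_apply', phiStep_eq_of_isPhiSwap hs]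
    exact ⟨hw', by omega, by omega⟩

end IsNEDWithCore

end Invariant

/-- For `γ ∈ {NE,D}*` with `φ(γ) = (γ₀, …, γ_b)`, `b = bounce(γ)`:
for all `0 ≤ i < b`, `area(γ_{i+1}) = area(γᵢ) + 1`, `bounce(γ_{i+1}) = bounce(γᵢ) - 1`,
`area(γᵢ) = bounce(γ_{b-i})` and `bounce(γᵢ) = area(γ_{b-i})`. -/
theorem stmt6 (g : List Step) (h : IsNED g) :
    ∀ i < bounce g,
      area (phiStep^[i+1] g) = area (phiStep^[i] g) + 1 ∧
      bounce (phiStep^[i+1] g) = bounce (phiStep^[i] g) - 1 ∧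
      area (phiStep^[i] g) = bounce (phiStep^[bounce g - i] g) ∧
      bounce (phiStep^[i] g) = area (phiStep^[bounce g - i] g) := by
  intro i hi
  have orbit {j : ℕ} (hj : j ≤ bounce g) := h.isNEDWithCore.iterate_phiStep hj
  obtain ⟨-, hb₁, ha₁⟩ := orbit hi.le
  obtain ⟨-, hb₂, ha₂⟩ := orbit (j := i + 1) hi
  obtain ⟨-, hb₃, ha₃⟩ := orbit (j := bounce g - i) (Nat.sub_le _ _)
  rw [h.area_eq_zero] at ha₁ ha₂ ha₃
  omega
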